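/- (Lemma 3.3, specialization of the B_2 polynomials.) For all i, j ∈ I_M one has B_{2,i}(z_j, Λ) = N_i(Λ) · Φ_q(ī | j̄ ; q^{−M}, Λ^{−1}), where ī = (i_1,…,i_{N−1}) and j̄ = (j_1,…,j_{N−1}). -/

import Mathlib

/-!
Lemma 3.3: specialization of the `B₂` polynomials,
`B_{2,i}(z_j, Λ) = N_i(Λ) · Φ_q(ī|j̄; q^{−M}, Λ^{−1})`.
Tuples `i ∈ I_M` are encoded 0-based as `i : Fin N → ℕ` with `∑ i_a = M`;
the point `z_j` has coordinates `z_{j,a} = q^{j_1+⋯+j_{a−1}}` (1-based), i.e.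
`zfun j a = q^{∑_{b<a} j_b}` for `0 ≤ a < N` (0-based), with the convention
`z_{N+1} = Λ·z_1`, i.e. `zfun j N = Λ`.
-/

noncomputable section
open scoped Classical

def qPochGen (q u : ℂ) (m : ℕ) : ℂ := ∏ k ∈ Finset.range m, (1 - u * q ^ k)

def qPoch (q : ℂ) (m : ℕ) : ℂ := ∏ k ∈ Finset.range m, (1 - q ^ (k + 1))

def isum {n : ℕ} (i : Fin n → ℤ) : ℤ := ∑ a, i a

def ipair {n : ℕ} (i j : Fin n → ℤ) : ℤ :=
  ∑ a, ∑ b, if a < b then i a * j b else 0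

/-- the function `Φ_q(γ|β;λ,μ)`. -/
def Phi (q : ℂ) {n : ℕ} (γ β : Fin n → ℤ) (lam mu : ℂ) : ℂ :=
  if 0 ≤ γ ∧ γ ≤ β then
    q ^ (ipair (β - γ) γ) * (mu / lam) ^ (isum γ).toNat
      * qPochGen q lam (isum γ).toNat
      * qPochGen q (mu / lam) (isum β - isum γ).toNat
      / qPochGen q mu (isum β).toNat
      * ∏ a, (qPoch q (β a).toNat / (qPoch q (γ a).toNat * qPoch q (β a - γ a).toNat))
  else 0

/-- the coordinates of the reference point `z_j`, extended by `z_{N+1} = Λ` via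
the slot `a = N`:  `zfun j a = q^{j_1+⋯+j_a}` for `a < N` (0-based) and
`zfun j N = Λ`. -/
def zfun (q Λ : ℂ) (N : ℕ) (j : Fin N → ℕ) (a : ℕ) : ℂ :=
  if a < N then q ^ (∑ b : Fin N, if (b : ℕ) < a then j b else 0) else Λ

/-- `B_{2,i}(z_j,Λ) = ∏_{a=1}^{N} ∏_{k=0}^{i_a−1} (z_{a+1} − q^k z_a)` evaluated
at the point `z_j`. -/
def B2 (q Λ : ℂ) (N : ℕ) (i j : Fin N → ℕ) : ℂ :=
  ∏ a : Fin N, ∏ k ∈ Finset.range (i a),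
    (zfun q Λ N j ((a : ℕ) + 1) - q ^ k * zfun q Λ N j (a : ℕ))

/-- `N_i(Λ) = (Λ⁻¹;q)_M Λ^M (q;q)_M⁻¹ ∏_a (q;q)_{i_a}`. -/
def Npoly (q Λ : ℂ) (N M : ℕ) (i : Fin N → ℕ) : ℂ :=
  qPochGen q Λ⁻¹ M * Λ ^ M / qPoch q M * ∏ a : Fin N, qPoch q (i a)

open Fin.NatCast in
/-- truncation `ī = (i_1,…,i_{N−1})` of a tuple `i ∈ I_M`. -/
def ibar (N : ℕ) [NeZero N] (i : Fin N → ℕ) : Fin (N - 1) → ℤ :=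
  fun a => (i (((a : ℕ)) : Fin N) : ℤ)


/-!
At `z_j` consecutive coordinates differ by `q`-powers, `z_{a+1} = q^{j_a} z_a` for `a < N`, so the
`a`-th block of `B_{2,i}` is `q^{i_a (j_1+⋯+j_{a-1})} ∏_{k<i_a} (q^{j_a} - q^k)`. This vanishes
when `i_a > j_a` (as does `Φ_q`), and otherwise equals, up to the sign `(-1)^{i_a}` and a power of
`q`, the quotient `(q;q)_{j_a}/(q;q)_{j_a-i_a}` appearing in `Φ_q`. The last block is
`∏_{k<i_N} (Λ - q^{k+|j̄|}) = Λ^{i_N} (Λ⁻¹q^{|j̄|};q)_{i_N}`, which the factorisation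
`(u;q)_{a+b} = (u;q)_a (uq^a;q)_b` matches with the ratio of `(Λ⁻¹;q)`-symbols in `N_i Φ_q`,
while `(q^{-M};q)_{|ī|}` supplies the total sign and cancels `(q;q)_M/(q;q)_{i_N}`. What remains
is the power of `q`: `⟨j̄-ī, ī⟩ + binom(|ī|, 2) = ∑_a i_a (j_1+⋯+j_{a-1}) + ∑_a binom(i_a, 2)`.
-/

open Finset

section QPochhammer

variable (q : ℂ)

theorem qPoch_succ (m : ℕ) : qPoch q (m + 1) = qPoch q m * (1 - q ^ (m + 1)) :=
  prod_range_succ _ _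

theorem qPoch_ne_zero (hq : ∀ m : ℕ, 0 < m → q ^ m ≠ 1) (m : ℕ) : qPoch q m ≠ 0 :=
  prod_ne_zero_iff.2 fun k _ h => hq (k + 1) k.succ_pos (sub_eq_zero.1 h).symm

theorem qPochGen_add (u : ℂ) (a b : ℕ) :
    qPochGen q u (a + b) = qPochGen q u a * qPochGen q (u * q ^ a) b := by
  simp only [qPochGen, prod_range_add, pow_add, mul_assoc]

theorem qPochGen_ne_zero {u : ℂ} {m : ℕ} (h : ∀ k < m, u * q ^ k ≠ 1) : qPochGen q u m ≠ 0 :=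
  prod_ne_zero_iff.2 fun k hk h0 => h k (mem_range.1 hk) (sub_eq_zero.1 h0).symm

theorem qPochGen_mul_pow_of_mul_eq_one {u v : ℂ} (huv : u * v = 1) (m : ℕ) :
    qPochGen q u m * v ^ m = ∏ k ∈ range m, (v - q ^ k) := by
  calc qPochGen q u m * v ^ m = ∏ k ∈ range m, (1 - u * q ^ k) * v := by
        rw [qPochGen, ← prod_mul_pow_card, card_range]
    _ = ∏ k ∈ range m, (v - q ^ k) := by
      refine prod_congr rfl fun k _ => ?_
      linear_combination (-q ^ k) * huv

theorem prod_range_sub_eq_pow_mul_qPochGen {Λ : ℂ} (hΛ : Λ ≠ 0) (c : ℂ) (r : ℕ) :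
    ∏ k ∈ range r, (Λ - q ^ k * c) = Λ ^ r * qPochGen q (Λ⁻¹ * c) r := by
  calc ∏ k ∈ range r, (Λ - q ^ k * c) = ∏ k ∈ range r, Λ * (1 - Λ⁻¹ * c * q ^ k) :=
        prod_congr rfl fun k _ => by field_simp
    _ = Λ ^ r * qPochGen q (Λ⁻¹ * c) r := by rw [prod_mul_distrib, prod_const, card_range, qPochGen]

theorem qPoch_sub_mul_prod_pow_sub_pow {m j : ℕ} (h : m ≤ j) :
    qPoch q (j - m) * ∏ k ∈ range m, (q ^ j - q ^ k)
      = (-1) ^ m * q ^ (∑ k ∈ range m, k) * qPoch q j := by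
  induction m with
  | zero => simp
  | succ m ih =>
    have hpoch : qPoch q (j - m) = qPoch q (j - (m + 1)) * (1 - q ^ (j - m)) := by
      rw [show j - m = j - (m + 1) + 1 by omega, qPoch_succ]
    have hfac : q ^ j - q ^ m = -q ^ m * (1 - q ^ (j - m)) := by
      rw [show j = m + (j - m) by omega, pow_add, Nat.add_sub_cancel_left]; ring
    have ih' := ih (by omega)
    rw [hpoch] at ih'
    rw [prod_range_succ, sum_range_succ, pow_add, pow_succ, hfac]
    linear_combination (-q ^ m) * ih'

theorem qPochGen_inv_pow_mul (hq0 : q ≠ 0) {G M : ℕ} (h : G ≤ M) :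
    qPochGen q (q ^ M)⁻¹ G * qPoch q (M - G) * (q ^ M) ^ G
      = (-1) ^ G * q ^ (∑ k ∈ range G, k) * qPoch q M := by
  rw [mul_right_comm, qPochGen_mul_pow_of_mul_eq_one q (inv_mul_cancel₀ (pow_ne_zero M hq0)),
    mul_comm, qPoch_sub_mul_prod_pow_sub_pow q h]

end QPochhammer

section Exponents

variable {n : ℕ}

theorem ipair_sub_left (x y z : Fin n → ℤ) : ipair (x - y) z = ipair x z - ipair y z := by
  simp only [ipair, ← sum_sub_distrib, Pi.sub_apply]
  refine sum_congr rfl fun a _ => sum_congr rfl fun b _ => ?_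
  split_ifs <;> ring

theorem ipair_eq_sum_partialSum_mul (x y : Fin n → ℤ) :
    ipair x y = ∑ b, (∑ a, if a < b then x a else 0) * y b := by
  rw [ipair, sum_comm]
  refine sum_congr rfl fun b _ => ?_
  rw [sum_mul]
  refine sum_congr rfl fun a _ => ?_
  split_ifs <;> ring

theorem ipair_castSucc (x y : Fin (n + 1) → ℤ) :
    ipair x y = ipair (fun a => x a.castSucc) (fun a => y a.castSucc)
      + (∑ a : Fin n, x a.castSucc) * y (Fin.last n) := by
  simp [ipair, Fin.sum_univ_castSucc, Fin.castSucc_lt_last, not_lt.2 (Fin.le_last _), sum_mul,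
    sum_add_distrib]

theorem sum_range_sum_eq_add_ipair (x : Fin n → ℕ) :
    ∑ k ∈ range (∑ a, x a), (k : ℤ)
      = ∑ a, ∑ k ∈ range (x a), (k : ℤ) + ipair (fun a => (x a : ℤ)) (fun a => (x a : ℤ)) := by
  induction n with
  | zero => simp [ipair]
  | succ n ih =>
    rw [Fin.sum_univ_castSucc, Fin.sum_univ_castSucc, ipair_castSucc, sum_range_add, ih]
    push_cast
    simp only [sum_add_distrib, sum_const, card_range, nsmul_eq_mul]
    ring

theorem cast_sum_partialSum_mul_add_eq_ipair (γ β : Fin n → ℕ) :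
    ((∑ a : Fin n, ((∑ b : Fin n, if b < a then β b else 0) * γ a + ∑ k ∈ range (γ a), k) : ℕ) : ℤ)
      = ipair ((fun a => (β a : ℤ)) - fun a => (γ a : ℤ)) (fun a => (γ a : ℤ))
        + ((∑ k ∈ range (∑ a, γ a), k : ℕ) : ℤ) := by
  push_cast
  rw [ipair_sub_left, ipair_eq_sum_partialSum_mul, sum_range_sum_eq_add_ipair, sum_add_distrib]
  ring

theorem sum_ite_val_lt_succ (f : Fin n → ℕ) (a : Fin n) :
    (∑ b : Fin n, if (b : ℕ) < a + 1 then f b else 0)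
      = (∑ b : Fin n, if (b : ℕ) < a then f b else 0) + f a := by
  have hsplit : ∀ b : Fin n, (if (b : ℕ) < a + 1 then f b else 0)
      = (if (b : ℕ) < a then f b else 0) + if a = b then f b else 0 := fun b => by
    simp only [Fin.ext_iff]; split_ifs <;> omega
  rw [sum_congr rfl fun b _ => hsplit b, sum_add_distrib, sum_ite_eq, if_pos (mem_univ a)]

theorem sum_ite_val_lt_castSucc (f : Fin (n + 1) → ℕ) {t : ℕ} (ht : t ≤ n) :
    (∑ b : Fin (n + 1), if (b : ℕ) < t then f b else 0)
      = ∑ b : Fin n, if (b : ℕ) < t then f b.castSucc else 0 := by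
  rw [Fin.sum_univ_castSucc, Fin.val_last, if_neg (by omega), add_zero]
  rfl

end Exponents

theorem Phi_natCast (q : ℂ) {n : ℕ} {γ β : Fin n → ℕ} (h : γ ≤ β) (lam mu : ℂ) :
    Phi q (fun a => (γ a : ℤ)) (fun a => (β a : ℤ)) lam mu
      = q ^ ipair ((fun a => (β a : ℤ)) - fun a => (γ a : ℤ)) (fun a => (γ a : ℤ))
        * (mu / lam) ^ (∑ a, γ a) * qPochGen q lam (∑ a, γ a)
        * qPochGen q (mu / lam) (∑ a, β a - ∑ a, γ a) / qPochGen q mu (∑ a, β a)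
        * ∏ a, (qPoch q (β a) / (qPoch q (γ a) * qPoch q (β a - γ a))) := by
  have hsum : ∑ a, γ a ≤ ∑ a, β a := sum_le_sum fun a _ => h a
  have hcond : (0 : Fin n → ℤ) ≤ (fun a => (γ a : ℤ)) ∧ (fun a => (γ a : ℤ)) ≤ fun a => (β a : ℤ) :=
    ⟨fun a => Int.natCast_nonneg _, fun a => Int.ofNat_le.2 (h a)⟩
  simp only [Phi, if_pos hcond, isum, ← Nat.cast_sum, ← Nat.cast_sub hsum, Int.toNat_natCast,
    ← Nat.cast_sub (h _)]

theorem ibar_succ {n : ℕ} (i : Fin (n + 1) → ℕ) :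
    ibar (n + 1) i = fun a : Fin n => (i a.castSucc : ℤ) := by
  funext a
  rw [ibar]
  congr 2
  exact Fin.ext (Fin.val_cast_of_lt (Nat.lt_succ_of_lt a.isLt))

section Specialization

variable (q Λ : ℂ) {n : ℕ}

theorem B2_succ (i j : Fin (n + 1) → ℕ) :
    B2 q Λ (n + 1) i j
      = (∏ a : Fin n, q ^ ((∑ b : Fin n, if b < a then j b.castSucc else 0) * i a.castSucc)
          * ∏ k ∈ range (i a.castSucc), (q ^ j a.castSucc - q ^ k))
        * ∏ k ∈ range (i (Fin.last n)), (Λ - q ^ k * q ^ ∑ a : Fin n, j a.castSucc) := by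
  have hz : ∀ t ≤ n, zfun q Λ (n + 1) j t
      = q ^ ∑ b : Fin n, if (b : ℕ) < t then j b.castSucc else 0 := fun t ht => by
    rw [zfun, if_pos (by omega), sum_ite_val_lt_castSucc j ht]
  have hfac : ∀ a : Fin n, ∀ k, zfun q Λ (n + 1) j (a + 1) - q ^ k * zfun q Λ (n + 1) j a
      = q ^ (∑ b : Fin n, if b < a then j b.castSucc else 0) * (q ^ j a.castSucc - q ^ k) := by
    intro a k
    rw [hz _ a.isLt, hz _ a.isLt.le, sum_ite_val_lt_succ (fun b => j b.castSucc)]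
    simp only [Fin.lt_def, pow_add]
    ring
  rw [B2, Fin.prod_univ_castSucc]
  congr 1
  · refine prod_congr rfl fun a _ => ?_
    simp only [Fin.val_castSucc, hfac, prod_mul_distrib, prod_const, card_range, pow_mul]
  · refine prod_congr rfl fun k _ => ?_
    rw [Fin.val_last, zfun, if_neg (by omega), hz n le_rfl]
    simp only [Fin.is_lt, if_true]

theorem B2_eq_zero (i j : Fin (n + 1) → ℕ) {a : Fin n} (ha : j a.castSucc < i a.castSucc) :
    B2 q Λ (n + 1) i j = 0 := by
  rw [B2_succ]
  apply mul_eq_zero_of_left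
  apply prod_eq_zero (mem_univ a)
  apply mul_eq_zero_of_right
  exact prod_eq_zero (mem_range.2 ha) (sub_self _)

theorem B2_eq_of_le (hq : ∀ m : ℕ, 0 < m → q ^ m ≠ 1) (hΛ0 : Λ ≠ 0) (i j : Fin (n + 1) → ℕ)
    (hle : ∀ a : Fin n, i a.castSucc ≤ j a.castSucc) :
    B2 q Λ (n + 1) i j
      = (-1) ^ (∑ a : Fin n, i a.castSucc)
        * q ^ (∑ a : Fin n, ((∑ b : Fin n, if b < a then j b.castSucc else 0) * i a.castSucc
          + ∑ k ∈ range (i a.castSucc), k))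
        * (∏ a : Fin n, qPoch q (j a.castSucc) / qPoch q (j a.castSucc - i a.castSucc))
        * (Λ ^ i (Fin.last n)
          * qPochGen q (Λ⁻¹ * q ^ ∑ a : Fin n, j a.castSucc) (i (Fin.last n))) := by
  have hfac : ∀ a : Fin n, ∏ k ∈ range (i a.castSucc), (q ^ j a.castSucc - q ^ k)
      = (-1) ^ i a.castSucc * q ^ (∑ k ∈ range (i a.castSucc), k)
        * (qPoch q (j a.castSucc) / qPoch q (j a.castSucc - i a.castSucc)) := fun a => by
    rw [← mul_div_assoc]
    refine eq_div_of_mul_eq (qPoch_ne_zero q hq _) ?_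
    rw [mul_comm, qPoch_sub_mul_prod_pow_sub_pow q (hle a)]
  rw [B2_succ, prod_range_sub_eq_pow_mul_qPochGen q hΛ0]
  simp only [hfac, prod_mul_distrib, prod_pow_eq_pow_sum, sum_add_distrib, pow_add]
  ring

theorem Npoly_mul_Phi_eq (hq0 : q ≠ 0) (hq : ∀ m : ℕ, 0 < m → q ^ m ≠ 1) {M : ℕ}
    (hΛ0 : Λ ≠ 0) (hΛ : ∀ m : ℕ, m < M → Λ ≠ q ^ m) (i j : Fin (n + 1) → ℕ)
    (hi : ∑ a, i a = M) (hj : ∑ a, j a = M) (hle : ∀ a : Fin n, i a.castSucc ≤ j a.castSucc) :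
    Npoly q Λ (n + 1) M i
        * Phi q (fun a => (i a.castSucc : ℤ)) (fun a => (j a.castSucc : ℤ)) (q ^ (-(M : ℤ))) Λ⁻¹
      = (-1) ^ (∑ a : Fin n, i a.castSucc)
        * (q ^ ipair ((fun a => (j a.castSucc : ℤ)) - fun a => (i a.castSucc : ℤ))
            (fun a => (i a.castSucc : ℤ)) * q ^ (∑ k ∈ range (∑ a : Fin n, i a.castSucc), k))
        * (∏ a : Fin n, qPoch q (j a.castSucc) / qPoch q (j a.castSucc - i a.castSucc))
        * (Λ ^ i (Fin.last n)
          * qPochGen q (Λ⁻¹ * q ^ ∑ a : Fin n, j a.castSucc) (i (Fin.last n))) := by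
  set G := ∑ a : Fin n, i a.castSucc
  set B := ∑ a : Fin n, j a.castSucc
  set r := i (Fin.last n)
  set e := ipair ((fun a => (j a.castSucc : ℤ)) - fun a => (i a.castSucc : ℤ))
    (fun a => (i a.castSucc : ℤ))
  have hG : G + r = M := by rw [← hi, Fin.sum_univ_castSucc]
  have hB : B + j (Fin.last n) = M := by rw [← hj, Fin.sum_univ_castSucc]
  have hGB : G ≤ B := sum_le_sum fun a _ => hle a
  have hX : qPochGen q Λ⁻¹ M * qPochGen q (Λ⁻¹ * q ^ M) (B - G) / qPochGen q Λ⁻¹ B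
      = qPochGen q (Λ⁻¹ * q ^ B) r := by
    rw [div_eq_iff (qPochGen_ne_zero q fun k hk h => hΛ k (by omega) ((inv_mul_eq_one₀ hΛ0).1 h)),
      mul_comm (qPochGen q _ r), ← qPochGen_add, ← qPochGen_add]
    congr 1
    omega
  have hsign : qPochGen q (q ^ M)⁻¹ G * (q ^ M) ^ G * qPoch q r / qPoch q M
      = (-1) ^ G * q ^ (∑ k ∈ range G, k) := by
    rw [div_eq_iff (qPoch_ne_zero q hq M), ← qPochGen_inv_pow_mul q hq0 (by omega : G ≤ M),
      show M - G = r by omega]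
    ring
  have hΛpow : Λ ^ M * Λ⁻¹ ^ G = Λ ^ r := by
    rw [← hG, pow_add, inv_pow]
    field_simp
  have hprod : (∏ a : Fin n, qPoch q (i a.castSucc))
      * ∏ a : Fin n,
          qPoch q (j a.castSucc) / (qPoch q (i a.castSucc) * qPoch q (j a.castSucc - i a.castSucc))
      = ∏ a : Fin n, qPoch q (j a.castSucc) / qPoch q (j a.castSucc - i a.castSucc) := by
    rw [← prod_mul_distrib]
    refine prod_congr rfl fun a _ => ?_
    field_simp [qPoch_ne_zero q hq]
  rw [Npoly, Phi_natCast q hle, Fin.prod_univ_castSucc, zpow_neg, zpow_natCast, div_inv_eq_mul]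
  calc _ = (qPochGen q Λ⁻¹ M * qPochGen q (Λ⁻¹ * q ^ M) (B - G) / qPochGen q Λ⁻¹ B)
        * (qPochGen q (q ^ M)⁻¹ G * (q ^ M) ^ G * qPoch q r / qPoch q M) * (Λ ^ M * Λ⁻¹ ^ G) * q ^ e
        * ((∏ a : Fin n, qPoch q (i a.castSucc)) * ∏ a : Fin n, qPoch q (j a.castSucc)
          / (qPoch q (i a.castSucc) * qPoch q (j a.castSucc - i a.castSucc))) := by ring
    _ = _ := by rw [hX, hsign, hΛpow, hprod]; ring

end Specialization

/-- **Lemma 3.3**: `B_{2,i}(z_j,Λ) = N_i(Λ)·Φ_q(ī|j̄; q^{−M}, Λ^{−1})`. -/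
theorem B2_specialization (q : ℂ) (hq0 : q ≠ 0) (hq : ∀ m : ℕ, 0 < m → q ^ m ≠ 1)
    (N M : ℕ) [NeZero N] (Λ : ℂ) (hΛ0 : Λ ≠ 0) (hΛ : ∀ m : ℕ, m < M → Λ ≠ q ^ m)
    (i j : Fin N → ℕ) (hi : ∑ a, i a = M) (hj : ∑ a, j a = M) :
    B2 q Λ N i j
      = Npoly q Λ N M i * Phi q (ibar N i) (ibar N j) (q ^ (-(M : ℤ))) Λ⁻¹ := by
  obtain ⟨n, rfl⟩ : ∃ n, N = n + 1 := ⟨N - 1, (Nat.succ_pred_eq_of_pos (NeZero.pos N)).symm⟩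
  rw [ibar_succ, ibar_succ]
  by_cases hle : ∀ a : Fin n, i a.castSucc ≤ j a.castSucc
  · rw [B2_eq_of_le q Λ hq hΛ0 i j hle, Npoly_mul_Phi_eq q Λ hq0 hq hΛ0 hΛ i j hi hj hle,
      ← zpow_natCast q, cast_sum_partialSum_mul_add_eq_ipair, zpow_add₀ hq0, zpow_natCast]
  · push Not at hle
    obtain ⟨a, ha⟩ := hle
    rw [B2_eq_zero q Λ i j ha, Phi, if_neg fun h => (h.2 a).not_gt (Int.ofNat_lt.2 ha), mul_zero]
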